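/- arXiv:1502.03699 — 4 statements merged into one kernel-verified Lean document; each statement's English description precedes it below -/
import Mathlib

section
/- In knapsack Instance 1, any binary string x with x_i = 1 for exactly αn/2 indices i ∈ I and x_i = 0 elsewhere is feasible, has objective value αn/2, and is a local optimum: every feasible string y at Hamming distance 1 from x satisfies f(y) < f(x). -/
open Finset

/-- Value of item `i` in knapsack Instance 1. -/
noncomputable def v1 (α : ℝ) (n : ℕ) (i : ℕ) : ℝ :=
  if i = 1 then n else if i ≤ n / 2 + 1 then 1 else α ^ Real.log n

/-- Weight of item `i` in knapsack Instance 1. -/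
noncomputable def w1 (α : ℝ) (n : ℕ) (i : ℕ) : ℝ :=
  if i = 1 then n else if i ≤ n / 2 + 1 then 2 / α else α ^ (2 * Real.log n)

/-- Objective value of a knapsack `x` in Instance 1. -/
noncomputable def f1 (α : ℝ) (n : ℕ) (x : Finset ℕ) : ℝ := ∑ i ∈ x, v1 α n i

/-- Total weight of a knapsack `x` in Instance 1. -/
noncomputable def wt1 (α : ℝ) (n : ℕ) (x : Finset ℕ) : ℝ := ∑ i ∈ x, w1 α n i

/-- Feasibility in Instance 1: total weight at most the capacity `W = n`. -/
def feasible1 (α : ℝ) (n : ℕ) (x : Finset ℕ) : Prop := wt1 α n x ≤ n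

/-- In knapsack Instance 1, any string with exactly `αn/2` ones, all in
`I = {2,…,n/2+1}`, is feasible, has objective value `αn/2`, and is a local optimum:
every feasible string at Hamming distance 1 has strictly smaller objective value. -/
theorem stmt3 (α : ℝ) (n : ℕ) (hα : α ∈ Set.Ioo (0 : ℝ) 1) (heven : 2 ∣ n)
    (k : ℕ) (hk0 : 0 < k) (hk : (k : ℝ) = α * n / 2)
    (h1 : (n : ℝ) > 2 / α) (h2 : 2 / α > (n : ℝ) * α ^ (2 * Real.log n) / 2)
    (x : Finset ℕ) (hxI : x ⊆ Finset.Icc 2 (n / 2 + 1)) (hxcard : x.card = k) :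
    feasible1 α n x ∧ f1 α n x = α * n / 2 ∧
      ∀ y : Finset ℕ, y ⊆ Finset.Icc 1 n → feasible1 α n y →
        (symmDiff x y).card = 1 → f1 α n y < f1 α n x := by

  obtain ⟨hα0, hα1⟩ := hα
  have hn0 : (0:ℝ) < n := lt_trans (by positivity) h1
  have hvx : ∀ i ∈ x, v1 α n i = 1 := by
    intro i hi
    have h := hxI hi
    simp only [Finset.mem_Icc] at h
    rw [v1, if_neg (by omega), if_pos h.2]
  have hwx : ∀ i ∈ x, w1 α n i = 2 / α := by
    intro i hi
    have h := hxI hi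
    simp only [Finset.mem_Icc] at h
    rw [w1, if_neg (by omega), if_pos h.2]
  have hfx : f1 α n x = k := by
    rw [f1, Finset.sum_congr rfl hvx, Finset.sum_const, hxcard, nsmul_eq_mul, mul_one]
  have hwtx : wt1 α n x = n := by
    rw [wt1, Finset.sum_congr rfl hwx, Finset.sum_const, hxcard, nsmul_eq_mul, hk]
    field_simp
  have hwpos : ∀ j : ℕ, 0 < w1 α n j := by
    intro j
    rw [w1]
    split
    · exact hn0
    · split
      · positivity
      · positivity
  refine ⟨le_of_eq hwtx, by rw [hfx, hk], ?_⟩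
  intro y hyIcc hyfeas hsd
  obtain ⟨j, hj⟩ := Finset.card_eq_one.mp hsd
  have hmem : ∀ a, (a ∈ x ∧ a ∉ y ∨ a ∈ y ∧ a ∉ x) ↔ a = j := by
    intro a
    rw [← Finset.mem_symmDiff, hj, Finset.mem_singleton]
  by_cases hjx : j ∈ x
  · have hjy : j ∉ y := by
      have := (hmem j).mpr rfl
      tauto
    have hy : y = x.erase j := by
      ext a
      simp only [Finset.mem_erase]
      by_cases ha : a = j
      · subst ha; tauto
      · have := (hmem a).not.mpr (by exact ha)
        push_neg at this
        tauto
    have : f1 α n y = f1 α n x - v1 α n j := by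
      rw [hy, f1, f1, Finset.sum_erase_eq_sub hjx]
    rw [this, hvx j hjx]
    linarith
  · have hjy : j ∈ y := by
      have := (hmem j).mpr rfl
      tauto
    have hy : y = insert j x := by
      ext a
      simp only [Finset.mem_insert]
      by_cases ha : a = j
      · subst ha; tauto
      · have := (hmem a).not.mpr (by exact ha)
        push_neg at this
        tauto
    exfalso
    have hwty : wt1 α n y = w1 α n j + wt1 α n x := by
      rw [hy, wt1, wt1, Finset.sum_insert hjx]
    have := hwpos j
    have : wt1 α n y > n := by rw [hwty, hwtx]; linarith
    exact absurd hyfeas (not_le.mpr this)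
end

section
/- In knapsack Instance 1, the infeasible solutions of the form x_vio1 (exactly αn/2 ones in I and exactly one 1 in J) and x_vio2 (x_1 = 1 and exactly one 1 in J) achieve the minimum constraint violation among all infeasible solutions, with violation value α^(2 ln n). -/
open Finset

lemma wt1_decomp (α : ℝ) (n : ℕ) (x : Finset ℕ) :
    wt1 α n x = ((x.filter (fun i => i = 1)).card : ℝ) * n
      + ((x.filter (fun i => ¬ i = 1 ∧ i ≤ n / 2 + 1)).card : ℝ) * (2 / α)
      + ((x.filter (fun i => ¬ i = 1 ∧ ¬ i ≤ n / 2 + 1)).card : ℝ)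
          * α ^ (2 * Real.log n) := by
  unfold wt1
  rw [← Finset.sum_filter_add_sum_filter_not x (fun i => i = 1),
    ← Finset.sum_filter_add_sum_filter_not (x.filter (fun i => ¬ i = 1))
      (fun i => i ≤ n / 2 + 1), Finset.filter_filter, Finset.filter_filter]
  have e1 : ∑ i ∈ x.filter (fun i => i = 1), w1 α n i
      = ((x.filter (fun i => i = 1)).card : ℝ) * n := by
    rw [Finset.sum_congr rfl (g := fun _ => (n : ℝ)) ?_, Finset.sum_const, nsmul_eq_mul]
    intro i hi
    simp only [Finset.mem_filter] at hi
    simp [w1, hi.2]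
  have e2 : ∑ i ∈ x.filter (fun i => ¬ i = 1 ∧ i ≤ n / 2 + 1), w1 α n i
      = ((x.filter (fun i => ¬ i = 1 ∧ i ≤ n / 2 + 1)).card : ℝ) * (2 / α) := by
    rw [Finset.sum_congr rfl (g := fun _ => (2 / α : ℝ)) ?_, Finset.sum_const, nsmul_eq_mul]
    intro i hi
    simp only [Finset.mem_filter] at hi
    simp [w1, hi.2.1, hi.2.2]
  have e3 : ∑ i ∈ x.filter (fun i => ¬ i = 1 ∧ ¬ i ≤ n / 2 + 1), w1 α n i
      = ((x.filter (fun i => ¬ i = 1 ∧ ¬ i ≤ n / 2 + 1)).card : ℝ) * α ^ (2 * Real.log n) := by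
    rw [Finset.sum_congr rfl (g := fun _ => (α ^ (2 * Real.log n) : ℝ)) ?_,
      Finset.sum_const, nsmul_eq_mul]
    intro i hi
    simp only [Finset.mem_filter] at hi
    simp [w1, hi.2.1, hi.2.2]
  rw [e1, e2, e3]; ring

/-- In knapsack Instance 1, the infeasible solutions `x_vio1` (exactly `αn/2` ones
in `I` plus one 1 in `J`) and `x_vio2` (`x₁ = 1` plus one 1 in `J`) have constraint
violation exactly `α^(2 ln n)`, which is the minimum violation among all infeasible
solutions. -/
theorem stmt5 (α : ℝ) (n : ℕ) (hα : α ∈ Set.Ioo (0 : ℝ) 1) (heven : 2 ∣ n)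
    (k : ℕ) (hk0 : 0 < k) (hk : (k : ℝ) = α * n / 2)
    (h1 : (n : ℝ) > 2 / α) (h2 : 2 / α > (n : ℝ) * α ^ (2 * Real.log n) / 2)
    (S : Finset ℕ) (hS : S ⊆ Finset.Icc 2 (n / 2 + 1)) (hScard : S.card = k)
    (j j' : ℕ) (hj : j ∈ Finset.Icc (n / 2 + 2) n) (hj' : j' ∈ Finset.Icc (n / 2 + 2) n) :
    wt1 α n (insert j S) - n = α ^ (2 * Real.log n) ∧
    wt1 α n {1, j'} - n = α ^ (2 * Real.log n) ∧
      ∀ x : Finset ℕ, x ⊆ Finset.Icc 1 n → ¬ feasible1 α n x →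
        α ^ (2 * Real.log n) ≤ wt1 α n x - n := by
  obtain ⟨hα0, hα1⟩ := hα
  have hαne : α ≠ 0 := ne_of_gt hα0
  have hApos : 0 < α ^ (2 * Real.log n) := Real.rpow_pos_of_pos hα0 _
  have hdiv : n / 2 * 2 = n := Nat.div_mul_cancel heven
  have hnpos : 0 < n := by
    rcases Nat.eq_zero_or_pos n with h | h
    · exfalso
      subst h
      have : (k : ℝ) = 0 := by rw [hk]; norm_num
      have : k = 0 := by exact_mod_cast this
      omega
    · exact h
  have hn2 : 2 ≤ n := by omega
  have hhalf : ((n / 2 : ℕ) : ℝ) = (n : ℝ) / 2 := by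
    rw [Nat.cast_div_charZero heven]
    norm_num
  -- key constants
  have hkn : (k : ℝ) * (2 / α) = n := by rw [hk]; field_simp
  have hn2' : (2 : ℝ) ≤ (n : ℝ) := by exact_mod_cast hn2
  have hAlt : α ^ (2 * Real.log n) < 2 / α := by nlinarith
  have h2a : (0 : ℝ) < 2 / α := by positivity
  simp only [Finset.mem_Icc] at hj hj'
  have hj1 : j ≠ 1 := by omega
  have hjle : ¬ j ≤ n / 2 + 1 := by omega
  have hj'1 : (1 : ℕ) ≠ j' := by omega
  refine ⟨?_, ?_, ?_⟩
  · -- x_vio1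
    have hjS : j ∉ S := fun h => by
      have := hS h
      simp only [Finset.mem_Icc] at this
      omega
    have hsum : ∑ i ∈ S, w1 α n i = (S.card : ℝ) * (2 / α) := by
      rw [Finset.sum_congr rfl (g := fun _ => (2 / α : ℝ)) ?_, Finset.sum_const, nsmul_eq_mul]
      intro i hi
      have := hS hi
      simp only [Finset.mem_Icc] at this
      simp [w1, show i ≠ 1 by omega, this.2]
    rw [wt1, Finset.sum_insert hjS, hsum, hScard, hkn]
    simp [w1, hj1, hjle]
  · -- x_vio2
    rw [wt1, Finset.sum_pair hj'1]
    simp [w1, show j' ≠ 1 by omega, show ¬ j' ≤ n / 2 + 1 by omega]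
  · -- minimality
    intro x hx hinf
    have hgt : (n : ℝ) < wt1 α n x := lt_of_not_ge hinf
    rw [wt1_decomp] at hgt ⊢
    set A : ℝ := α ^ (2 * Real.log n) with hA
    set a := (x.filter (fun i => i = 1)).card with ha
    set b := (x.filter (fun i => ¬ i = 1 ∧ i ≤ n / 2 + 1)).card with hb
    set c := (x.filter (fun i => ¬ i = 1 ∧ ¬ i ≤ n / 2 + 1)).card with hc
    clear_value A a b c
    have ha1 : a ≤ 1 := by
      have hsub : x.filter (fun i => i = 1) ⊆ {1} := by
        intro i hi; simp only [Finset.mem_filter] at hi; simp [hi.2]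
      rw [ha]
      simpa using Finset.card_le_card hsub
    have hcle : c ≤ n / 2 := by
      have hsub : x.filter (fun i => ¬ i = 1 ∧ ¬ i ≤ n / 2 + 1) ⊆ Finset.Icc (n / 2 + 2) n := by
        intro i hi
        simp only [Finset.mem_filter] at hi
        have := hx hi.1
        simp only [Finset.mem_Icc] at this ⊢
        omega
      have hcard := Finset.card_le_card hsub
      rw [Nat.card_Icc] at hcard
      rw [hc]
      omega
    have hcA : (c : ℝ) * A < 2 / α := by
      have h3 : (c : ℝ) ≤ (n : ℝ) / 2 := by
        rw [← hhalf]; exact_mod_cast hcle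
      nlinarith
    have hcA0 : (0 : ℝ) ≤ (c : ℝ) * A := by positivity
    have ekn1 : ((k : ℝ) - 1) * (2 / α) = (n : ℝ) - 2 / α := by rw [← hkn]; ring
    have ekn2 : ((k : ℝ) + 1) * (2 / α) = (n : ℝ) + 2 / α := by rw [← hkn]; ring
    rcases Nat.eq_zero_or_pos a with haz | hap
    · -- a = 0
      rw [haz] at hgt ⊢
      push_cast at hgt ⊢
      rcases lt_or_ge b k with hbk | hbk
      · -- b ≤ k - 1 : contradiction, x is feasible
        exfalso
        have hb' : (b : ℝ) + 1 ≤ (k : ℝ) := by exact_mod_cast hbk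
        have hbb : (b : ℝ) * (2 / α) ≤ ((k : ℝ) - 1) * (2 / α) :=
          mul_le_mul_of_nonneg_right (by linarith) h2a.le
        linarith
      · -- b ≥ k
        have hbk' : (k : ℝ) ≤ (b : ℝ) := by exact_mod_cast hbk
        rcases Nat.eq_zero_or_pos c with hcz | hcp
        · -- c = 0 : must have b ≥ k+1
          have hbk1 : k + 1 ≤ b := by
            by_contra h
            have hbe : b = k := by omega
            rw [hbe, hcz] at hgt
            push_cast at hgt
            linarith
          have hb1 : (k : ℝ) + 1 ≤ (b : ℝ) := by exact_mod_cast hbk1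
          have hbb : ((k : ℝ) + 1) * (2 / α) ≤ (b : ℝ) * (2 / α) :=
            mul_le_mul_of_nonneg_right (by linarith) h2a.le
          linarith
        · have hc1 : (1 : ℝ) ≤ (c : ℝ) := by exact_mod_cast hcp
          have hbb : (k : ℝ) * (2 / α) ≤ (b : ℝ) * (2 / α) :=
            mul_le_mul_of_nonneg_right hbk' h2a.le
          have hcc : (1 : ℝ) * A ≤ (c : ℝ) * A :=
            mul_le_mul_of_nonneg_right hc1 hApos.le
          linarith
    · -- a = 1
      have hae : a = 1 := by omega
      rw [hae] at hgt ⊢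
      push_cast at hgt ⊢
      rcases Nat.eq_zero_or_pos b with hbz | hbp
      · rcases Nat.eq_zero_or_pos c with hcz | hcp
        · exfalso
          rw [hbz, hcz] at hgt
          push_cast at hgt
          linarith
        · have hc1 : (1 : ℝ) ≤ (c : ℝ) := by exact_mod_cast hcp
          have hcc : (1 : ℝ) * A ≤ (c : ℝ) * A :=
            mul_le_mul_of_nonneg_right hc1 hApos.le
          have hbb0 : (0 : ℝ) ≤ (b : ℝ) * (2 / α) := by positivity
          linarith
      · have hb1 : (1 : ℝ) ≤ (b : ℝ) := by exact_mod_cast hbp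
        have hbb : (1 : ℝ) * (2 / α) ≤ (b : ℝ) * (2 / α) :=
          mul_le_mul_of_nonneg_right hb1 h2a.le
        linarith
end

section
/- In knapsack Instance 1, the number of infeasible solutions of type x_vio1 equals C(n/2, αn/2)·(n/2 − 1), which is at least ((n−1)/2)·(1/α)^(αn/2). -/
open Finset

/-! Intersecting with `I` and with `J` identifies the `x_vio1` solutions with pairs of a
`k`-subset of `I` and a one-element subset of `J`. For the bound put `m = n/2`, so `α = k/m`.
In `C(m, k) = ∏_{i<k} (m - i)/(k - i)` every factor is at least `m/k`, and the last one is
`m - k + 1`; the surplus of that last factor over `m/k` absorbs the ratio `(m - 1/2)/(m - 1)`. -/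

namespace Finset

variable {ι : Type*} [DecidableEq ι] {I J : Finset ι}

lemma union_inter_eq_left_of_disjoint (hIJ : Disjoint I J) {s t : Finset ι} (hs : s ⊆ I)
    (ht : t ⊆ J) : (s ∪ t) ∩ I = s := by
  rw [union_inter_distrib_right, inter_eq_left.mpr hs,
    disjoint_iff_inter_eq_empty.mp (hIJ.symm.mono_left ht), union_empty]

lemma card_filter_powerset_card_inter_eq {U : Finset ι} (hIJ : Disjoint I J) (hU : I ∪ J ⊆ U)
    (a b : ℕ) :
    #{x ∈ U.powerset | x ⊆ I ∪ J ∧ #(x ∩ I) = a ∧ #(x ∩ J) = b} =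
      (#I).choose a * (#J).choose b := by
  have inter_left {s t} (hs : s ⊆ I) (ht : t ⊆ J) : (s ∪ t) ∩ I = s :=
    union_inter_eq_left_of_disjoint hIJ hs ht
  have inter_right {s t} (hs : s ⊆ I) (ht : t ⊆ J) : (s ∪ t) ∩ J = t := by
    rw [union_comm]; exact union_inter_eq_left_of_disjoint hIJ.symm ht hs
  rw [← card_powersetCard, ← card_powersetCard, ← card_product]
  refine card_nbij' (fun x => (x ∩ I, x ∩ J)) (fun p => p.1 ∪ p.2) ?_ ?_ ?_ ?_
  · intro x hx
    simp only [mem_coe, mem_filter, mem_powerset] at hx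
    simp only [coe_product, Set.mem_prod, mem_coe, mem_powersetCard]
    exact ⟨⟨inter_subset_right, hx.2.2.1⟩, inter_subset_right, hx.2.2.2⟩
  · rintro ⟨s, t⟩ hst
    simp only [coe_product, Set.mem_prod, mem_coe, mem_powersetCard] at hst
    obtain ⟨⟨hs, rfl⟩, ht, rfl⟩ := hst
    simp only [mem_coe, mem_filter, mem_powerset]
    exact ⟨(union_subset_union hs ht).trans hU, union_subset_union hs ht,
      by rw [inter_left hs ht], by rw [inter_right hs ht]⟩
  · intro x hx
    simp only [mem_coe, mem_filter, mem_powerset] at hx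
    simp only [← inter_union_distrib_left, inter_eq_left.mpr hx.2.1]
  · rintro ⟨s, t⟩ hst
    simp only [coe_product, Set.mem_prod, mem_coe, mem_powersetCard] at hst
    simp only [inter_left hst.1.1 hst.2.1, inter_right hst.1.1 hst.2.1]

end Finset

namespace Nat

theorem pow_mul_descFactorial_le_descFactorial_mul_pow {K m : ℕ} (hKm : K ≤ m) (j : ℕ) :
    m ^ j * K.descFactorial j ≤ m.descFactorial j * K ^ j := by
  induction j with
  | zero => simp
  | succ j ih =>
    have hfactor : m * (K - j) ≤ (m - j) * K := by
      rw [Nat.mul_sub, Nat.sub_mul, Nat.mul_comm j K]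
      exact Nat.sub_le_sub_left (Nat.mul_le_mul_right j hKm) _
    calc m ^ (j + 1) * K.descFactorial (j + 1)
        = (m * (K - j)) * (m ^ j * K.descFactorial j) := by
          rw [descFactorial_succ, pow_succ]; ring
      _ ≤ ((m - j) * K) * (m.descFactorial j * K ^ j) := Nat.mul_le_mul hfactor ih
      _ = m.descFactorial (j + 1) * K ^ (j + 1) := by rw [descFactorial_succ, pow_succ]; ring

theorem succ_descFactorial_self (j : ℕ) : (j + 1).descFactorial j = (j + 1)! := by
  simpa using (descFactorial_succ (j + 1) j).symm.trans (descFactorial_self (j + 1))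

theorem pow_mul_sub_le_choose_succ_mul_pow (m j : ℕ) :
    m ^ j * (m - j) ≤ m.choose (j + 1) * (j + 1) ^ j := by
  rcases le_or_gt m j with hmj | hjm
  · simp [Nat.sub_eq_zero_of_le hmj]
  have hdesc := pow_mul_descFactorial_le_descFactorial_mul_pow hjm j
  rw [succ_descFactorial_self] at hdesc
  refine Nat.le_of_mul_le_mul_left ?_ (factorial_pos (j + 1))
  calc (j + 1)! * (m ^ j * (m - j)) = (m - j) * (m ^ j * (j + 1)!) := by ring
    _ ≤ (m - j) * (m.descFactorial j * (j + 1) ^ j) := Nat.mul_le_mul_left _ hdesc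
    _ = (j + 1)! * (m.choose (j + 1) * (j + 1) ^ j) := by
      rw [← mul_assoc, ← descFactorial_succ, descFactorial_eq_factorial_mul_choose]; ring

end Nat

theorem half_two_mul_sub_one_mul_div_pow_le_choose_mul {m k : ℕ} (hk : 2 ≤ k) (hkm : k < m) :
    (2 * m - 1) / 2 * ((m : ℝ) / k) ^ k ≤ m.choose k * (m - 1) := by
  obtain ⟨j, rfl⟩ : ∃ j, k = j + 1 := ⟨k - 1, by omega⟩
  have hchoose : (m : ℝ) ^ j * (m - j) ≤ m.choose (j + 1) * (j + 1) ^ j := by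
    rw [← Nat.cast_sub (by omega)]
    exact_mod_cast Nat.pow_mul_sub_le_choose_succ_mul_pow m j
  have hj : (1 : ℝ) ≤ j := by exact_mod_cast (by omega : 1 ≤ j)
  have hjm : (j : ℝ) + 2 ≤ m := by exact_mod_cast (by omega : j + 2 ≤ m)
  -- `2(j+1)(m-j)(m-1) - (2m-1)m = 2(m-1)(j-1)(m-2-j) + (m-3)(2m-1) + 1`
  have hquad : (2 * (m : ℝ) - 1) * m ≤ 2 * (j + 1) * (m - j) * (m - 1) := by
    nlinarith [mul_nonneg (mul_nonneg (by linarith : (0 : ℝ) ≤ m - 1)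
      (by linarith : (0 : ℝ) ≤ j - 1)) (by linarith : (0 : ℝ) ≤ m - 2 - j),
      mul_nonneg (by linarith : (0 : ℝ) ≤ m - 3) (by linarith : (0 : ℝ) ≤ 2 * m - 1)]
  push_cast
  rw [div_pow, div_mul_div_comm, div_le_iff₀ (by positivity)]
  calc (2 * (m : ℝ) - 1) * m ^ (j + 1) = (2 * m - 1) * m * m ^ j := by ring
    _ ≤ 2 * (j + 1) * (m - j) * (m - 1) * m ^ j := by gcongr
    _ = 2 * (j + 1) * (m - 1) * (m ^ j * (m - j)) := by ring
    _ ≤ 2 * (j + 1) * (m - 1) * (m.choose (j + 1) * (j + 1) ^ j) := by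
      gcongr
      exact mul_nonneg (by positivity) (by linarith)
    _ = m.choose (j + 1) * (m - 1) * (2 * (j + 1) ^ (j + 1)) := by ring

theorem stmt6_general (α : ℝ) (n : ℕ) (hα : α ∈ Set.Ioo (0 : ℝ) 1) (heven : 2 ∣ n)
    (k : ℕ) (hk : (k : ℝ) = α * n / 2)
    (h1 : (n : ℝ) > 2 / α) :
    (((Finset.Icc 1 n).powerset.filter (fun x =>
        x ⊆ Finset.Icc 2 (n / 2 + 1) ∪ Finset.Icc (n / 2 + 2) n ∧
        (x ∩ Finset.Icc 2 (n / 2 + 1)).card = k ∧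
        (x ∩ Finset.Icc (n / 2 + 2) n).card = 1)).card
      = (n / 2).choose k * (n / 2 - 1)) ∧
    (((n : ℝ) - 1) / 2 * (1 / α) ^ k ≤ (((n / 2).choose k * (n / 2 - 1) : ℕ) : ℝ)) := by
  obtain ⟨hα0, hα1⟩ := hα
  obtain ⟨m, rfl⟩ := heven
  simp only [Nat.mul_div_cancel_left m two_pos]
  have hk_eq : (k : ℝ) = α * m := by push_cast at hk; linarith
  have hαm : 1 < α * m := by
    rw [gt_iff_lt, div_lt_iff₀ hα0] at h1; push_cast at h1; linarith
  have hm : (0 : ℝ) < m := pos_of_mul_pos_right (by linarith) hα0.le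
  have hk2 : 2 ≤ k := by
    have : (1 : ℝ) < k := by linarith
    exact_mod_cast this
  have hk_lt : k < m := by
    have : (k : ℝ) < m := by nlinarith
    exact_mod_cast this
  constructor
  · rw [card_filter_powerset_card_inter_eq _ _ k 1, Nat.card_Icc, Nat.card_Icc,
      Nat.choose_one_right]
    · congr 1; omega
    · exact disjoint_left.mpr fun i hi hj => by simp only [mem_Icc] at hi hj; omega
    · intro i hi; simp only [mem_union, mem_Icc] at hi ⊢; omega
  · have hα_inv : 1 / α = m / k := by rw [hk_eq]; field_simp
    rw [hα_inv]
    push_cast [Nat.cast_sub (show 1 ≤ m by omega)]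
    exact half_two_mul_sub_one_mul_div_pow_le_choose_mul hk2 hk_lt

/-- In knapsack Instance 1, the number of infeasible solutions of type `x_vio1`
(exactly `αn/2 = k` ones in `I` and exactly one 1 in `J`) equals
`C(n/2, k)·(n/2 − 1)`, which is at least `((n−1)/2)·(1/α)^k`. -/
theorem stmt6 (α : ℝ) (n : ℕ) (hα : α ∈ Set.Ioo (0 : ℝ) 1) (heven : 2 ∣ n)
    (k : ℕ) (hk0 : 0 < k) (hk : (k : ℝ) = α * n / 2)
    (h1 : (n : ℝ) > 2 / α) (h2 : 2 / α > (n : ℝ) * α ^ (2 * Real.log n) / 2) :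
    (((Finset.Icc 1 n).powerset.filter (fun x =>
        x ⊆ Finset.Icc 2 (n / 2 + 1) ∪ Finset.Icc (n / 2 + 2) n ∧
        (x ∩ Finset.Icc 2 (n / 2 + 1)).card = k ∧
        (x ∩ Finset.Icc (n / 2 + 2) n).card = 1)).card
      = (n / 2).choose k * (n / 2 - 1)) ∧
    (((n : ℝ) - 1) / 2 * (1 / α) ^ k ≤ (((n / 2).choose k * (n / 2 - 1) : ℕ) : ℝ)) :=
  stmt6_general α n hα heven k hk h1
end

section
/- In knapsack Instance 2, the number of local optima x_loc equals (n/4 − 2)·C(n/2, n/4 − 2), which is exponential in n: it is at least 2^(n/4) for sufficiently large n. -/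
/-!
For pairwise disjoint `I`, `J`, `K`, a set `x` with `J ⊆ x ⊆ I ∪ J ∪ K` is determined by its
traces `x ∩ I` and `x ∩ K`, and every pair of traces occurs, so such sets with
`#(x ∩ I) = a` and `#(x ∩ K) = k` number `C(#I, a) · C(#K, k)`. For `n = 4m` this gives
`(m - 2) · C(2m, m - 2)`, and since `C(2m, m - 2) ≥ C(2(m - 2), m - 2) > 2^(m - 2)` once
`m - 2 ≥ 4`, the count is at least `4 · 2^(m - 2) = 2^m`.
-/

open Finset

namespace Finset

variable {α : Type*} [DecidableEq α] {I J K A B : Finset α}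

theorem union_union_inter_left_of_disjoint (hA : A ⊆ I) (hB : B ⊆ K)
    (hIJ : Disjoint I J) (hIK : Disjoint I K) : (A ∪ J ∪ B) ∩ I = A := by
  rw [union_inter_distrib_right, union_inter_distrib_right, inter_eq_left.2 hA,
    disjoint_iff_inter_eq_empty.1 hIJ.symm,
    disjoint_iff_inter_eq_empty.1 (disjoint_of_subset_left hB hIK.symm), union_empty, union_empty]

theorem union_union_inter_right_of_disjoint (hA : A ⊆ I) (hB : B ⊆ K)
    (hIK : Disjoint I K) (hJK : Disjoint J K) : (A ∪ J ∪ B) ∩ K = B := by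
  rw [union_inter_distrib_right, union_inter_distrib_right, inter_eq_left.2 hB,
    disjoint_iff_inter_eq_empty.1 hJK,
    disjoint_iff_inter_eq_empty.1 (disjoint_of_subset_left hA hIK), empty_union, empty_union]

theorem inter_union_union_inter_of_subset {x : Finset α} (hx : x ⊆ I ∪ J ∪ K) (hJx : J ⊆ x) :
    x ∩ I ∪ J ∪ x ∩ K = x := by
  rw [← inter_eq_right.2 hJx, ← inter_union_distrib_left, ← inter_union_distrib_left,
    inter_eq_left.2 hx]

theorem card_filter_powerset_eq_choose_mul_choose {U : Finset α} (hU : I ∪ J ∪ K ⊆ U)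
    (hIJ : Disjoint I J) (hIK : Disjoint I K) (hJK : Disjoint J K) (a k : ℕ) :
    #(U.powerset.filter fun x => x ⊆ I ∪ J ∪ K ∧ #(x ∩ I) = a ∧ J ⊆ x ∧ #(x ∩ K) = k) =
      (#I).choose a * (#K).choose k := by
  rw [← card_powersetCard, ← card_powersetCard, ← card_product]
  refine card_nbij' (fun x => (x ∩ I, x ∩ K)) (fun p => p.1 ∪ J ∪ p.2) ?_ ?_ ?_ ?_
  · intro x hx
    simp only [mem_coe, mem_filter, mem_product, mem_powersetCard] at hx ⊢
    exact ⟨⟨inter_subset_right, hx.2.2.1⟩, inter_subset_right, hx.2.2.2.2⟩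
  · rintro ⟨A, B⟩ hAB
    simp only [mem_coe, mem_filter, mem_product, mem_powersetCard, mem_powerset] at hAB ⊢
    obtain ⟨⟨hA, hAcard⟩, hB, hBcard⟩ := hAB
    have hsub : A ∪ J ∪ B ⊆ I ∪ J ∪ K := union_subset_union (union_subset_union hA subset_rfl) hB
    refine ⟨hsub.trans hU, hsub, ?_, subset_union_right.trans subset_union_left, ?_⟩
    · rw [union_union_inter_left_of_disjoint hA hB hIJ hIK, hAcard]
    · rw [union_union_inter_right_of_disjoint hA hB hIK hJK, hBcard]
  · intro x hx
    simp only [mem_coe, mem_filter] at hx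
    exact inter_union_union_inter_of_subset hx.2.1 hx.2.2.2.1
  · rintro ⟨A, B⟩ hAB
    simp only [mem_coe, mem_product, mem_powersetCard] at hAB
    exact Prod.ext (union_union_inter_left_of_disjoint hAB.1.1 hAB.2.1 hIJ hIK)
      (union_union_inter_right_of_disjoint hAB.1.1 hAB.2.1 hIK hJK)

end Finset

theorem Nat.two_pow_lt_centralBinom {k : ℕ} (hk : 4 ≤ k) : 2 ^ k < k.centralBinom := by
  have h := Nat.four_pow_lt_mul_centralBinom k hk
  rw [show (4 : ℕ) ^ k = 2 ^ k * 2 ^ k by rw [← mul_pow]; norm_num] at h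
  exact Nat.lt_of_mul_lt_mul_left (h.trans_le (Nat.mul_le_mul_right _ k.lt_two_pow_self.le))

theorem two_pow_le_mul_choose {m : ℕ} (hm : 6 ≤ m) : 2 ^ m ≤ (m - 2) * (2 * m).choose (m - 2) :=
  calc 2 ^ m = 2 ^ 2 * 2 ^ (m - 2) := by rw [← pow_add]; congr 1; omega
    _ ≤ (m - 2) * (m - 2).centralBinom :=
      Nat.mul_le_mul (by omega) (Nat.two_pow_lt_centralBinom (by omega)).le
    _ ≤ (m - 2) * (2 * m).choose (m - 2) :=
      Nat.mul_le_mul_left _ (Nat.choose_le_choose _ (by omega))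

/-- In knapsack Instance 2, the number of local optima `x_loc` (one index chosen
from `I = {3,…,n/4}`, all of `J = {n/4+1,…,n/2}`, and `n/4 − 2` indices chosen from
`K = {n/2+1,…,n}`) equals `(n/4 − 2)·C(n/2, n/4 − 2)`, which is exponential in `n`:
it is at least `2^(n/4)` for sufficiently large `n`. -/
theorem stmt14 :
    ∃ N : ℕ, ∀ n : ℕ, N ≤ n → 4 ∣ n →
      (((Finset.Icc 1 n).powerset.filter (fun x =>
          x ⊆ Finset.Icc 3 (n / 4) ∪ Finset.Icc (n / 4 + 1) (n / 2) ∪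
              Finset.Icc (n / 2 + 1) n ∧
          (x ∩ Finset.Icc 3 (n / 4)).card = 1 ∧
          Finset.Icc (n / 4 + 1) (n / 2) ⊆ x ∧
          (x ∩ Finset.Icc (n / 2 + 1) n).card = n / 4 - 2)).card
        = (n / 4 - 2) * (n / 2).choose (n / 4 - 2)) ∧
      2 ^ (n / 4) ≤ (n / 4 - 2) * (n / 2).choose (n / 4 - 2) := by
  refine ⟨24, fun n hn ⟨m, hnm⟩ => ⟨?_, ?_⟩⟩
  · have disjoint_Icc {a b c d : ℕ} (h : b < c) : Disjoint (Icc a b) (Icc c d) :=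
      disjoint_left.2 fun x hx hx' => by simp only [mem_Icc] at hx hx'; omega
    have hU : Icc 3 (n / 4) ∪ Icc (n / 4 + 1) (n / 2) ∪ Icc (n / 2 + 1) n ⊆ Icc 1 n :=
      fun x => by simp only [mem_union, mem_Icc]; omega
    have hI : #(Icc 3 (n / 4)) = n / 4 - 2 := by rw [Nat.card_Icc]; omega
    have hK : #(Icc (n / 2 + 1) n) = n / 2 := by rw [Nat.card_Icc]; omega
    rw [card_filter_powerset_eq_choose_mul_choose hU (disjoint_Icc (by omega))
      (disjoint_Icc (by omega)) (disjoint_Icc (by omega)), hI, hK, Nat.choose_one_right]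
  · rw [show n / 4 = m by omega, show n / 2 = 2 * m by omega]
    exact two_pow_le_mul_choose (by omega)
end
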